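/- Let F ∈ H^∞ and I be inner. If sup_{z∈D} |F(z)|^2(1 - |I(z)|^2) = ∥F∥_∞^2, then the product IF is G-extremal. -/

import Mathlib

open MeasureTheory Complex Real Filter Topology
open scoped ENNReal

/-- Normalized arc-length measure on the circle, parametrized by angle θ ∈ (0, 2π]. -/
noncomputable def circleM : Measure ℝ :=
  (ENNReal.ofReal (2 * Real.pi))⁻¹ • (volume.restrict (Set.Ioc 0 (2 * Real.pi)))

/-- Poisson kernel (density of harmonic measure ω_z w.r.t. circleM) at the boundary
point with angle θ. -/
noncomputable def pk (z : ℂ) (θ : ℝ) : ℝ :=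
  (1 - ‖z‖ ^ 2) / ‖Complex.exp (θ * Complex.I) - z‖ ^ 2

/-- Poisson integral of a complex boundary function. -/
noncomputable def poissonInt (f : ℝ → ℂ) (z : ℂ) : ℂ :=
  ∫ θ, (pk z θ : ℂ) * f θ ∂circleM

/-- Poisson integral of a real boundary function. -/
noncomputable def poissonIntR (u : ℝ → ℝ) (z : ℂ) : ℝ :=
  ∫ θ, pk z θ * u θ ∂circleM

/-- Φ_f(z) = P(|f|²)(z) - |Pf(z)|². -/
noncomputable def Phi (f : ℝ → ℂ) (z : ℂ) : ℝ :=
  (∫ θ, pk z θ * ‖f θ‖ ^ 2 ∂circleM) - ‖poissonInt f z‖ ^ 2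

/-- The open unit disk. -/
def unitDisk : Set ℂ := Metric.ball 0 1

/-- The Garsia norm ‖f‖_G = sup_{z ∈ 𝔻} Φ_f(z)^{1/2}, valued in ℝ≥0∞. -/
noncomputable def garsiaNorm (f : ℝ → ℂ) : ℝ≥0∞ :=
  ⨆ z : unitDisk, ENNReal.ofReal (Real.sqrt (Phi f (z : ℂ)))

/-! ### Auxiliary lemmas -/

lemma exp_sub_ne {z : ℂ} (hz : ‖z‖ < 1) (θ : ℝ) :
    Complex.exp (θ * Complex.I) - z ≠ 0 := by
  intro h
  have h2 : Complex.exp (θ * Complex.I) = z := by linear_combination h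
  rw [← h2, Complex.norm_exp_ofReal_mul_I] at hz
  exact lt_irrefl _ hz

lemma abs_exp_sub_lb {z : ℂ} (θ : ℝ) :
    1 - ‖z‖ ≤ ‖Complex.exp (θ * Complex.I) - z‖ := by
  have h := abs_norm_sub_norm_le (Complex.exp (θ * Complex.I)) z
  rw [Complex.norm_exp_ofReal_mul_I] at h
  have := abs_le.1 h
  linarith [this.1]

lemma pk_nonneg {z : ℂ} (hz : ‖z‖ < 1) (θ : ℝ) : 0 ≤ pk z θ := by
  apply div_nonneg
  · nlinarith [norm_nonneg z]
  · positivity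

lemma pk_le {z : ℂ} (hz : ‖z‖ < 1) (θ : ℝ) :
    pk z θ ≤ (1 - ‖z‖ ^ 2) / (1 - ‖z‖) ^ 2 := by
  have h1 : (0:ℝ) < 1 - ‖z‖ := by linarith
  have h2 := abs_exp_sub_lb (z := z) θ
  apply div_le_div_of_nonneg_left _ (by positivity) _
  · nlinarith [norm_nonneg z]
  · nlinarith

lemma continuous_pk {z : ℂ} (hz : ‖z‖ < 1) : Continuous (pk z) := by
  apply Continuous.div continuous_const
  · exact ((continuous_norm.comp ((Complex.continuous_exp.comp
      (by continuity)).sub continuous_const)).pow 2)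
  · intro θ
    have h := exp_sub_ne hz θ
    have : 0 < ‖Complex.exp (θ * Complex.I) - z‖ := norm_pos_iff.mpr h
    positivity

lemma integral_circle_div {z : ℂ} (hz : ‖z‖ < 1) :
    ∫ θ in (0:ℝ)..(2*π), Complex.exp (θ*Complex.I)/(Complex.exp (θ*Complex.I) - z) = 2*π := by
  have hin : z ∈ Metric.ball (0:ℂ) 1 := by
    simp [Metric.mem_ball, Complex.dist_eq, hz]
  have h1 := circleIntegral.integral_sub_inv_of_mem_ball hin
  rw [circleIntegral] at h1
  simp only [deriv_circleMap, circleMap_zero, smul_eq_mul, Complex.ofReal_one, one_mul] at h1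
  have h3 : ∫ θ in (0:ℝ)..(2*π),
      Complex.I * (Complex.exp (θ*Complex.I)/(Complex.exp (θ*Complex.I) - z)) = 2*π*Complex.I := by
    rw [← h1]
    apply intervalIntegral.integral_congr
    intro θ _
    have := exp_sub_ne hz θ
    field_simp
  rw [intervalIntegral.integral_const_mul] at h3
  have := mul_left_cancel₀ Complex.I_ne_zero (by rw [h3]; ring :
    Complex.I * (∫ θ in (0:ℝ)..(2*π), Complex.exp (θ*Complex.I)/(Complex.exp (θ*Complex.I) - z))
      = Complex.I * (2*π))
  exact this

lemma re_formula {w z : ℂ} (hw : ‖w‖ = 1) (hne : w - z ≠ 0) :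
    (2*(w/(w-z)) - 1).re = (1 - ‖z‖ ^ 2)/‖w - z‖ ^ 2 := by
  have h1 : 2*(w/(w-z)) - 1 = (w+z)/(w-z) := by field_simp; ring
  have hnsw : Complex.normSq w = 1 := by
    rw [← Complex.sq_norm, hw]; norm_num
  have hns : Complex.normSq (w - z) ≠ 0 := by
    simpa [Complex.normSq_eq_zero] using hne
  rw [h1, Complex.div_re, Complex.sq_norm, Complex.sq_norm, ← add_div,
    div_eq_div_iff hns hns]
  simp only [Complex.normSq_apply, Complex.add_re, Complex.add_im, Complex.sub_re,
    Complex.sub_im] at hnsw ⊢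
  linear_combination ((w.re - z.re) * (w.re - z.re) + (w.im - z.im) * (w.im - z.im)) * hnsw

lemma pk_eq_re {z : ℂ} (hz : ‖z‖ < 1) (θ : ℝ) :
    pk z θ = (2*(Complex.exp (θ*Complex.I)/(Complex.exp (θ*Complex.I)-z)) - 1).re := by
  rw [re_formula (Complex.norm_exp_ofReal_mul_I θ) (exp_sub_ne hz θ)]
  rfl

lemma continuous_g {z : ℂ} (hz : ‖z‖ < 1) :
    Continuous (fun θ : ℝ => Complex.exp (θ*Complex.I)/(Complex.exp (θ*Complex.I)-z)) := by
  apply Continuous.div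
  · exact Complex.continuous_exp.comp (by continuity)
  · exact (Complex.continuous_exp.comp (by continuity)).sub continuous_const
  · exact fun θ => exp_sub_ne hz θ

lemma integral_pk_interval {z : ℂ} (hz : ‖z‖ < 1) :
    ∫ θ in Set.Ioc (0:ℝ) (2*π), pk z θ = 2*π := by
  have h2 : ∫ θ in (0:ℝ)..(2*π),
      (2*(Complex.exp (θ*Complex.I)/(Complex.exp (θ*Complex.I)-z)) - 1) = 2*π := by
    rw [intervalIntegral.integral_sub, intervalIntegral.integral_const_mul,
      integral_circle_div hz, intervalIntegral.integral_const]
    · simp [smul_eq_mul]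
      ring
    · exact ((continuous_const.mul (continuous_g hz) : Continuous fun θ : ℝ =>
        2*(Complex.exp (θ*Complex.I)/(Complex.exp (θ*Complex.I)-z)))).intervalIntegrable _ _
    · exact intervalIntegrable_const
  have hle : (0:ℝ) ≤ 2*π := by positivity
  rw [intervalIntegral.integral_of_le hle] at h2
  have hint : IntegrableOn
      (fun θ : ℝ => 2*(Complex.exp (θ*Complex.I)/(Complex.exp (θ*Complex.I)-z)) - 1)
      (Set.Ioc (0:ℝ) (2*π)) volume :=
    (((continuous_const.mul (continuous_g hz) : Continuous fun θ : ℝ =>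
        2*(Complex.exp (θ*Complex.I)/(Complex.exp (θ*Complex.I)-z)))).sub
      continuous_const).integrableOn_Ioc
  calc ∫ θ in Set.Ioc (0:ℝ) (2*π), pk z θ
      = ∫ θ in Set.Ioc (0:ℝ) (2*π),
        (2*(Complex.exp (θ*Complex.I)/(Complex.exp (θ*Complex.I)-z)) - 1).re := by
        exact integral_congr_ae (ae_of_all _ fun θ => pk_eq_re hz θ)
    _ = (∫ θ in Set.Ioc (0:ℝ) (2*π),
        (2*(Complex.exp (θ*Complex.I)/(Complex.exp (θ*Complex.I)-z)) - 1)).re :=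
        integral_re hint
    _ = 2*π := by rw [h2]; simp

lemma integral_pk {z : ℂ} (hz : ‖z‖ < 1) :
    ∫ θ, pk z θ ∂circleM = 1 := by
  have hpi : (0:ℝ) < 2*π := by positivity
  rw [circleM, integral_smul_measure, integral_pk_interval hz]
  simp only [ENNReal.toReal_inv, ENNReal.toReal_ofReal hpi.le, smul_eq_mul]
  field_simp

instance : IsFiniteMeasure circleM := by
  constructor
  rw [circleM]
  simp only [Measure.smul_apply, Measure.restrict_apply MeasurableSet.univ, Set.univ_inter,
    Real.volume_Ioc, smul_eq_mul]
  exact ENNReal.mul_lt_top (by simp [Real.pi_pos]) ENNReal.ofReal_lt_top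

lemma integrable_bdd {f : ℝ → ℝ} (hm : AEStronglyMeasurable f circleM) {C : ℝ}
    (h : ∀ᵐ θ ∂circleM, |f θ| ≤ C) : Integrable f circleM :=
  Integrable.mono' (integrable_const C) hm (by simpa [Real.norm_eq_abs] using h)

lemma integrable_pk' {z : ℂ} (hz : ‖z‖ < 1) : Integrable (pk z) circleM :=
  integrable_bdd (continuous_pk hz).aestronglyMeasurable
    (ae_of_all _ fun θ => by
      rw [_root_.abs_of_nonneg (pk_nonneg hz θ)]; exact pk_le hz θ)

lemma pk_bound_nonneg {z : ℂ} (hz : ‖z‖ < 1) :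
    0 ≤ (1 - ‖z‖ ^ 2) / (1 - ‖z‖) ^ 2 :=
  div_nonneg (by nlinarith [norm_nonneg z]) (by positivity)

lemma integrable_pk_mul {f : ℝ → ℝ} {z : ℂ} (hz : ‖z‖ < 1)
    (hm : AEStronglyMeasurable f circleM) {C : ℝ} (h : ∀ᵐ θ ∂circleM, |f θ| ≤ C) :
    Integrable (fun θ => pk z θ * f θ) circleM := by
  refine integrable_bdd ((continuous_pk hz).aestronglyMeasurable.mul hm)
    (C := ((1 - ‖z‖ ^ 2) / (1 - ‖z‖) ^ 2) * |C|) ?_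
  filter_upwards [h] with θ hθ
  show |pk z θ * f θ| ≤ _
  rw [abs_mul, _root_.abs_of_nonneg (pk_nonneg hz θ)]
  exact mul_le_mul (pk_le hz θ) (hθ.trans (le_abs_self C)) (abs_nonneg _)
    (pk_bound_nonneg hz)

lemma integrable_pk_mulC {f : ℝ → ℂ} {z : ℂ} (hz : ‖z‖ < 1)
    (hm : AEStronglyMeasurable f circleM) {C : ℝ} (h : ∀ᵐ θ ∂circleM, ‖f θ‖ ≤ C) :
    Integrable (fun θ => (pk z θ : ℂ) * f θ) circleM := by
  apply Integrable.mono' (g := fun θ => ((1 - ‖z‖ ^ 2) / (1 - ‖z‖) ^ 2) * |C|)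
    (integrable_const _)
    (((Complex.continuous_ofReal.comp (continuous_pk hz)).aestronglyMeasurable).mul hm)
  filter_upwards [h] with θ hθ
  show ‖(pk z θ : ℂ) * f θ‖ ≤ _
  rw [norm_mul, Complex.norm_real, Real.norm_eq_abs, _root_.abs_of_nonneg (pk_nonneg hz θ)]
  exact mul_le_mul (pk_le hz θ) (hθ.trans (le_abs_self C)) (norm_nonneg _)
    (pk_bound_nonneg hz)

/-- Cauchy–Schwarz for the Poisson integral. -/
lemma sq_abs_poissonInt_le {f : ℝ → ℂ} {z : ℂ} (hz : ‖z‖ < 1)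
    (hm : AEStronglyMeasurable f circleM) {M : ℝ}
    (hbd : ∀ᵐ θ ∂circleM, ‖f θ‖ ≤ M) :
    ‖poissonInt f z‖ ^ 2 ≤ ∫ θ, pk z θ * ‖f θ‖ ^ 2 ∂circleM := by
  set c := poissonInt f z with hc
  have habs_bd : ∀ᵐ θ ∂circleM, |‖f θ‖ ^ 2| ≤ M^2 := by
    filter_upwards [hbd] with θ hθ
    rw [_root_.abs_of_nonneg (by positivity)]
    exact pow_le_pow_left₀ (norm_nonneg _) hθ 2
  have i1 : Integrable (fun θ => pk z θ * ‖f θ‖ ^ 2) circleM :=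
    integrable_pk_mul hz (by
      simp only [pow_two]
      exact hm.norm.mul hm.norm) habs_bd
  have i2 : Integrable (fun θ => (pk z θ : ℂ) * f θ) circleM := integrable_pk_mulC hz hm hbd
  have hre : c.re = ∫ θ, pk z θ * (f θ).re ∂circleM := by
    have h := integral_re (𝕜 := ℂ) i2
    simp only [RCLike.re_to_complex] at h
    rw [hc, poissonInt, ← h]
    exact integral_congr_ae (ae_of_all _ fun θ => by simp [Complex.mul_re])
  have him : c.im = ∫ θ, pk z θ * (f θ).im ∂circleM := by
    have h := integral_im (𝕜 := ℂ) i2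
    simp only [RCLike.im_to_complex] at h
    rw [hc, poissonInt, ← h]
    exact integral_congr_ae (ae_of_all _ fun θ => by simp [Complex.mul_im])
  have i2re : Integrable (fun θ => pk z θ * (f θ).re) circleM := by
    apply integrable_pk_mul hz hm.re
    filter_upwards [hbd] with θ hθ
    exact (Complex.abs_re_le_norm (f θ)).trans hθ
  have i2im : Integrable (fun θ => pk z θ * (f θ).im) circleM := by
    apply integrable_pk_mul hz hm.im
    filter_upwards [hbd] with θ hθ
    exact (Complex.abs_im_le_norm (f θ)).trans hθ
  have key : (0:ℝ) ≤ ∫ θ, pk z θ * ‖f θ - c‖ ^ 2 ∂circleM :=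
    integral_nonneg fun θ => mul_nonneg (pk_nonneg hz θ) (by positivity)
  have hpt : ∀ θ, pk z θ * ‖f θ - c‖ ^ 2 =
      (pk z θ * ‖f θ‖ ^ 2 + ‖c‖ ^ 2 * pk z θ) -
        (2*c.re*(pk z θ*(f θ).re) + 2*c.im*(pk z θ*(f θ).im)) := by
    intro θ
    rw [Complex.sq_norm, Complex.sq_norm, Complex.sq_norm]
    simp only [Complex.normSq_apply, Complex.sub_re, Complex.sub_im]
    ring
  have e1 : ∫ θ, pk z θ * ‖f θ - c‖ ^ 2 ∂circleM =
      ((∫ θ, pk z θ * ‖f θ‖ ^ 2 ∂circleM) + ‖c‖ ^ 2 * 1) -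
        (2*c.re*c.re + 2*c.im*c.im) := by
    simp_rw [hpt]
    have hA : Integrable
        (fun θ => pk z θ * ‖f θ‖ ^ 2 + ‖c‖ ^ 2 * pk z θ) circleM :=
      i1.add ((integrable_pk' hz).const_mul _)
    have hB : Integrable
        (fun θ => 2*c.re*(pk z θ*(f θ).re) + 2*c.im*(pk z θ*(f θ).im)) circleM :=
      (i2re.const_mul _).add (i2im.const_mul _)
    rw [integral_sub hA hB,
      integral_add i1 ((integrable_pk' hz).const_mul _),
      integral_add (i2re.const_mul _) (i2im.const_mul _),
      integral_const_mul, integral_const_mul, integral_const_mul,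
      integral_pk hz, ← hre, ← him]
  rw [e1] at key
  have hc2 : ‖c‖ ^ 2 = c.re*c.re + c.im*c.im := by
    rw [Complex.sq_norm, Complex.normSq_apply]
  linarith

/-- If F ∈ H^∞, I is inner and
sup_{z∈𝔻} |F(z)|²(1-|I(z)|²) = ‖F‖_∞², then IF is G-extremal. -/
theorem G_extremal_sufficient (Fa : ℂ → ℂ) (Fb : ℝ → ℂ) (Ia : ℂ → ℂ) (Ib : ℝ → ℂ)
    (hFinf : MemLp Fb ⊤ circleM)
    (hFanal : DifferentiableOn ℂ Fa unitDisk)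
    (hFrec : ∀ z ∈ unitDisk, poissonInt Fb z = Fa z)
    (hIanal : DifferentiableOn ℂ Ia unitDisk)
    (hIbdd : ∃ C : ℝ, ∀ z ∈ unitDisk, ‖Ia z‖ ≤ C)
    (hIuni : ∀ᵐ θ ∂circleM, ‖Ib θ‖ = 1)
    (hIrec : ∀ z ∈ unitDisk, poissonInt Ib z = Ia z)
    (hProdrec : ∀ z ∈ unitDisk,
      poissonInt (fun θ => Ib θ * Fb θ) z = Ia z * Fa z)
    (hsup : (⨆ z : unitDisk,
        ENNReal.ofReal (‖Fa (z : ℂ)‖ ^ 2 * (1 - ‖Ia (z : ℂ)‖ ^ 2)))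
      = (eLpNorm Fb ⊤ circleM) ^ 2) :
    garsiaNorm (fun θ => Ib θ * Fb θ) =
      eLpNorm (fun θ => Ib θ * Fb θ) ⊤ circleM := by
  classical
  set prod := fun θ => Ib θ * Fb θ with hprod
  set L := eLpNorm Fb ⊤ circleM with hLdef
  have hLne : L ≠ ⊤ := hFinf.2.ne
  set M := L.toReal with hM
  have hM0 : 0 ≤ M := ENNReal.toReal_nonneg
  have hLM : ENNReal.ofReal M = L := ENNReal.ofReal_toReal hLne
  have hzabs : ∀ z : unitDisk, ‖(z : ℂ)‖ < 1 := fun z => by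
    have h := z.2
    simp only [unitDisk, Metric.mem_ball, Complex.dist_eq, sub_zero] at h
    exact h
  have hbd : ∀ᵐ θ ∂circleM, ‖Fb θ‖ ≤ M := by
    filter_upwards [ae_le_eLpNormEssSup (f := Fb) (μ := circleM)] with θ hθ
    have h1 : (‖Fb θ‖₊ : ℝ≥0∞) ≤ L := by
      rw [hLdef, eLpNorm_exponent_top]; exact hθ
    have h2 := ENNReal.toReal_mono hLne h1
    simpa using h2
  have hLprod : eLpNorm prod ⊤ circleM = L := by
    rw [hLdef]
    apply eLpNorm_congr_norm_ae
    filter_upwards [hIuni] with θ hθ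
    simp [hprod, norm_mul, hθ]
  have hFm := hFinf.1
  have habs2 : ∀ᵐ θ ∂circleM, ‖prod θ‖ ^ 2 = ‖Fb θ‖ ^ 2 := by
    filter_upwards [hIuni] with θ hθ
    simp [hprod, norm_mul, hθ]
  have hPhi : ∀ z : unitDisk, Phi prod z =
      (∫ θ, pk z θ * ‖Fb θ‖ ^ 2 ∂circleM) - ‖Ia z * Fa z‖ ^ 2 := by
    intro z
    rw [Phi, hProdrec z z.2]
    congr 1
    exact integral_congr_ae (habs2.mono fun θ h => by dsimp only; rw [h])
  have hint_le : ∀ z : unitDisk,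
      (∫ θ, pk z θ * ‖Fb θ‖ ^ 2 ∂circleM) ≤ M ^ 2 := by
    intro z
    have hz := hzabs z
    have habs_bd : ∀ᵐ θ ∂circleM, |‖Fb θ‖ ^ 2| ≤ M ^ 2 := by
      filter_upwards [hbd] with θ hθ
      rw [_root_.abs_of_nonneg (by positivity)]
      exact pow_le_pow_left₀ (norm_nonneg _) hθ 2
    have i1 : Integrable (fun θ => pk (z:ℂ) θ * ‖Fb θ‖ ^ 2) circleM :=
      integrable_pk_mul hz (by
        simp only [pow_two]
        exact hFm.norm.mul hFm.norm) habs_bd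
    have i3 : Integrable (fun θ => pk (z:ℂ) θ * M ^ 2) circleM :=
      (integrable_pk' hz).mul_const _
    calc (∫ θ, pk (z:ℂ) θ * ‖Fb θ‖ ^ 2 ∂circleM)
        ≤ ∫ θ, pk (z:ℂ) θ * M ^ 2 ∂circleM := by
          apply integral_mono_ae i1 i3
          filter_upwards [hbd] with θ hθ
          exact mul_le_mul_of_nonneg_left
            (pow_le_pow_left₀ (norm_nonneg _) hθ 2) (pk_nonneg hz θ)
      _ = (∫ θ, pk (z:ℂ) θ ∂circleM) * M ^ 2 := integral_mul_const _ _
      _ = M ^ 2 := by rw [integral_pk hz, one_mul]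
  have hCS : ∀ z : unitDisk,
      ‖Fa z‖ ^ 2 ≤ ∫ θ, pk z θ * ‖Fb θ‖ ^ 2 ∂circleM := by
    intro z
    rw [← hFrec z z.2]
    exact sq_abs_poissonInt_le (hzabs z) hFm hbd
  have hlow : ∀ z : unitDisk,
      ‖Fa z‖ ^ 2 * (1 - ‖Ia z‖ ^ 2) ≤ Phi prod z := by
    intro z
    rw [hPhi z, norm_mul, mul_pow]
    nlinarith [hCS z]
  have hup : ∀ z : unitDisk, Phi prod z ≤ M ^ 2 := by
    intro z
    rw [hPhi z]
    have h1 := hint_le z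
    have h2 : (0:ℝ) ≤ ‖Ia z * Fa z‖ ^ 2 := by positivity
    linarith
  have hG_le : garsiaNorm prod ≤ L := by
    rw [garsiaNorm]
    apply iSup_le
    intro z
    have h1 : Real.sqrt (Phi prod z) ≤ M :=
      (Real.sqrt_le_sqrt (hup z)).trans (by rw [Real.sqrt_sq hM0])
    calc ENNReal.ofReal (Real.sqrt (Phi prod z)) ≤ ENNReal.ofReal M :=
          ENNReal.ofReal_le_ofReal h1
      _ = L := hLM
  have hL_le : L ≤ garsiaNorm prod := by
    have hsq : L ^ 2 ≤ (garsiaNorm prod) ^ 2 := by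
      rw [← hsup]
      apply iSup_le
      intro z
      calc ENNReal.ofReal (‖Fa z‖ ^ 2 * (1 - ‖Ia z‖ ^ 2))
          ≤ ENNReal.ofReal (Phi prod z) := ENNReal.ofReal_le_ofReal (hlow z)
        _ ≤ (ENNReal.ofReal (Real.sqrt (Phi prod z))) ^ 2 := by
            rcases le_or_gt 0 (Phi prod z) with h | h
            · rw [sq, ← ENNReal.ofReal_mul (Real.sqrt_nonneg _), Real.mul_self_sqrt h]
            · simp [ENNReal.ofReal_of_nonpos h.le]
        _ ≤ (garsiaNorm prod) ^ 2 := by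
            gcongr
            exact le_iSup (fun z : unitDisk => ENNReal.ofReal (Real.sqrt (Phi prod z))) z
    by_contra hcon
    push_neg at hcon
    exact absurd hsq (not_le.mpr (ENNReal.pow_lt_pow_left (by norm_num) hcon))
  rw [hLprod]
  exact le_antisymm hG_le hL_le
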